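/- If a tiling T of ℝⁿ is repetitive, then for every tiling T' in the continuous hull Ω_T, every patch of T appears (up to translation) in T'; consequently Ω_{T'} = Ω_T. -/

import Mathlib

/- Shared framework: tilings of ℝⁿ and the tiling inverse semigroup (Kellendonk),
   following Exel–Gonçalves–Starling. -/
open Set
open scoped Classical
noncomputable section

abbrev Rn (n : ℕ) := EuclideanSpace ℝ (Fin n)

/-- A prototile: a subset of ℝⁿ homeomorphic to the closed unit ball, carrying a label,
with the origin (the designated puncture) in its interior. -/
structure ProtoTile (n : ℕ) where
  carrier : Set (Rn n)
  label : ℕ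
  ball_like : Nonempty (carrier ≃ₜ (Metric.closedBall (0 : Rn n) 1 : Set (Rn n)))
  origin_mem : (0 : Rn n) ∈ interior carrier

/-- A tile: a translate `p + x` of a prototile `p`; `puncture` is the translation vector,
i.e. the designated point `x(t)` of the tile. -/
structure Tile (n : ℕ) where
  proto : ProtoTile n
  puncture : Rn n

namespace Tile

def carrier {n : ℕ} (t : Tile n) : Set (Rn n) := (fun y => y + t.puncture) '' t.proto.carrier

def translate {n : ℕ} (t : Tile n) (x : Rn n) : Tile n := ⟨t.proto, t.puncture + x⟩

end Tile

/-- `T + x`, the translate of a collection of tiles. -/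
def translateSet {n : ℕ} (T : Set (Tile n)) (x : Rn n) : Set (Tile n) :=
  (fun t => t.translate x) '' T

/-- A partial tiling: tiles with pairwise disjoint interiors. -/
def IsPartialTiling {n : ℕ} (T : Set (Tile n)) : Prop :=
  T.Pairwise fun t t' => interior t.carrier ∩ interior t'.carrier = ∅

/-- The support of a partial tiling. -/
def tsupport' {n : ℕ} (T : Set (Tile n)) : Set (Rn n) := ⋃ t ∈ T, t.carrier

/-- A tiling: a partial tiling whose support is all of ℝⁿ. -/
def IsTiling {n : ℕ} (T : Set (Tile n)) : Prop := IsPartialTiling T ∧ tsupport' T = univ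

/-- A patch: a finite partial tiling. -/
def IsPatch {n : ℕ} (P : Set (Tile n)) : Prop := IsPartialTiling P ∧ P.Finite

/-- `T(U)`: the tiles of `T` meeting the set `U`. -/
def tilesMeeting {n : ℕ} (T : Set (Tile n)) (U : Set (Rn n)) : Set (Tile n) :=
  {t | t ∈ T ∧ (t.carrier ∩ U).Nonempty}

/-- The tiling metric. -/
def tdist {n : ℕ} (T T' : Set (Tile n)) : ℝ :=
  sInf ({1} ∪ {ε : ℝ | 0 < ε ∧ ∃ x x' : Rn n, ‖x‖ < ε ∧ ‖x'‖ < ε ∧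
    tilesMeeting (translateSet T (-x)) (Metric.ball (0 : Rn n) (1/ε)) =
      tilesMeeting (translateSet T' (-x')) (Metric.ball (0 : Rn n) (1/ε))})

/-- Finite local complexity: for each `r > 0` there are only finitely many patches
`T(B(x,r))` up to translation. -/
def FLC {n : ℕ} (T : Set (Tile n)) : Prop :=
  ∀ r : ℝ, 0 < r → ∃ F : Set (Set (Tile n)), F.Finite ∧
    ∀ x : Rn n, ∃ P ∈ F, ∃ y : Rn n, tilesMeeting T (Metric.ball x r) = translateSet P y

/-- Repetitivity. -/
def Repetitive {n : ℕ} (T : Set (Tile n)) : Prop :=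
  ∀ P ⊆ T, IsPatch P → ∃ R : ℝ, 0 < R ∧ ∀ x : Rn n, ∃ y : Rn n,
    translateSet P y ⊆ tilesMeeting T (Metric.ball x R)

def IsPeriodic {n : ℕ} (T : Set (Tile n)) : Prop :=
  ∃ x : Rn n, x ≠ 0 ∧ translateSet T x = T

/-- The continuous hull `Ω_T`, characterized as the set of all tilings every patch of
which appears as a translate of a patch of `T`. -/
def hull {n : ℕ} (T : Set (Tile n)) : Set (Set (Tile n)) :=
  {T' | IsTiling T' ∧ ∀ P ⊆ T', IsPatch P → ∃ x : Rn n, translateSet P x ⊆ T}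

/-- Strong aperiodicity: the hull contains no periodic tiling. -/
def StronglyAperiodic {n : ℕ} (T : Set (Tile n)) : Prop := ∀ T' ∈ hull T, ¬ IsPeriodic T'

/-- The punctured hull: tilings of the hull with a puncture at the origin. -/
def puncturedHull {n : ℕ} (T : Set (Tile n)) : Set (Set (Tile n)) :=
  {T' | T' ∈ hull T ∧ ∃ t ∈ T', t.puncture = 0}

/-- `U(P,t) = {T' : P - x(t) ⊆ T'}`. -/
def U {n : ℕ} (P : Set (Tile n)) (t : Tile n) : Set (Set (Tile n)) :=
  {T' | translateSet P (-t.puncture) ⊆ T'}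

/-- The (tiling-metric) topology on the punctured hull: generated by the balls of `tdist`. -/
def punctopology {n : ℕ} (T : Set (Tile n)) : TopologicalSpace ↥(puncturedHull T) :=
  TopologicalSpace.generateFrom
    {V | ∃ T₀ ∈ puncturedHull T, ∃ ε : ℝ, 0 < ε ∧
      V = {T' : ↥(puncturedHull T) | tdist (T' : Set (Tile n)) T₀ < ε}}

/-- A representative `(t₁, P, t₂)` of a doubly-pointed pattern class of the tiling `T`:
`P` is a patch occurring in `T` whose support has connected interior, `t₁, t₂ ∈ P`. -/
structure SRep (n : ℕ) (T : Set (Tile n)) where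
  t1 : Tile n
  t2 : Tile n
  P : Set (Tile n)
  mem1 : t1 ∈ P
  mem2 : t2 ∈ P
  patch : IsPatch P
  conn : IsConnected (interior (tsupport' P))
  occurs : ∃ x : Rn n, translateSet P x ⊆ T

namespace SRep

variable {n : ℕ} {T : Set (Tile n)}

/-- The involution `[t₁,P,t₂]* = [t₂,P,t₁]`. -/
def star (s : SRep n T) : SRep n T := ⟨s.t2, s.t1, s.P, s.mem2, s.mem1, s.patch, s.conn, s.occurs⟩

/-- A representative of `s* s = [t₂,P,t₂]`. -/
def srcIdem (s : SRep n T) : SRep n T :=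
  ⟨s.t2, s.t2, s.P, s.mem2, s.mem2, s.patch, s.conn, s.occurs⟩

/-- A representative of `s s* = [t₁,P,t₁]`. -/
def ranIdem (s : SRep n T) : SRep n T :=
  ⟨s.t1, s.t1, s.P, s.mem1, s.mem1, s.patch, s.conn, s.occurs⟩

/-- Two triples represent the same doubly-pointed pattern class. -/
def Equiv' (a b : SRep n T) : Prop :=
  ∃ x : Rn n, a.t1.translate x = b.t1 ∧ a.t2.translate x = b.t2 ∧ translateSet a.P x = b.P

/-- The product `[t₁,P,t₂][t₁',P',t₂']` is nonzero: there are translations making both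
patches of `T` with `t₂ + x = t₁' + x'`. -/
def Compat (a b : SRep n T) : Prop :=
  ∃ x x' : Rn n, translateSet a.P x ⊆ T ∧ translateSet b.P x' ⊆ T ∧
    a.t2.translate x = b.t1.translate x'

/-- `c` represents the (nonzero) product of the classes of `a` and `b`:
`[t₁+x, (P+x) ∪ (P'+x'), t₂'+x']`. -/
def Prod' (a b c : SRep n T) : Prop :=
  ∃ x x' : Rn n, translateSet a.P x ⊆ T ∧ translateSet b.P x' ⊆ T ∧
    a.t2.translate x = b.t1.translate x' ∧
    ∃ y : Rn n, c.t1.translate y = a.t1.translate x ∧ c.t2.translate y = b.t2.translate x' ∧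
      translateSet c.P y = translateSet a.P x ∪ translateSet b.P x'

/-- The natural order on idempotent classes, concretely: `e ≤ f` iff for suitable
representatives `t = t'` and `P' ⊆ P`. -/
def le (e f : SRep n T) : Prop :=
  ∃ x : Rn n, f.t1.translate x = e.t1 ∧ translateSet f.P x ⊆ e.P

end SRep

/-- `g` represents `s* e s`. -/
def Prod3 {n : ℕ} {T : Set (Tile n)} (s e g : SRep n T) : Prop :=
  ∃ a : SRep n T, SRep.Prod' (SRep.star s) e a ∧ SRep.Prod' a s g

/-- A filter in the idempotent semilattice `E` of the tiling inverse semigroup, encoded as a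
translation-saturated set of idempotent representatives: nonempty, upward closed and downward
directed (zero is excluded automatically since only nonzero idempotents have representatives). -/
def IsFilterE {n : ℕ} (T : Set (Tile n)) (ξ : Set (SRep n T)) : Prop :=
  ξ.Nonempty ∧ (∀ e ∈ ξ, e.t1 = e.t2) ∧
  (∀ e ∈ ξ, ∀ f : SRep n T, f.t1 = f.t2 → SRep.le e f → f ∈ ξ) ∧
  (∀ e ∈ ξ, ∀ f ∈ ξ, ∃ g ∈ ξ, SRep.le g e ∧ SRep.le g f)

/-- An ultrafilter: a maximal filter. -/
def IsUltraE {n : ℕ} (T : Set (Tile n)) (ξ : Set (SRep n T)) : Prop :=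
  IsFilterE T ξ ∧ ∀ ζ : Set (SRep n T), IsFilterE T ζ → ξ ⊆ ζ → ζ = ξ

/-- `ξ_{T₀} = {[t,P,t] : t = T₀(0), t ∈ P ⊆ T₀}`: the idempotents whose patch, positioned with
its distinguished tile having puncture at the origin, lies in `T₀`. -/
def xiOf {n : ℕ} (T : Set (Tile n)) (T₀ : Set (Tile n)) : Set (SRep n T) :=
  {e | e.t1 = e.t2 ∧ ∃ x : Rn n, (e.t1.translate x).puncture = 0 ∧
    e.t1.translate x ∈ T₀ ∧ translateSet e.P x ⊆ T₀}

/-- The partial tiling `⋃ {P : [t,P,t] ∈ ξ}` associated to a filter (each patch positioned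
with the puncture of its distinguished tile at the origin). -/
def tilingOf {n : ℕ} {T : Set (Tile n)} (ξ : Set (SRep n T)) : Set (Tile n) :=
  ⋃ e ∈ ξ, translateSet e.P (-(e.t1.puncture))

/-- A character of the idempotent semilattice `E`: nonzero, constant on classes,
multiplicative, and vanishing on zero products. -/
def IsCharE {n : ℕ} (T : Set (Tile n)) (φ : SRep n T → Bool) : Prop :=
  (∃ e, φ e = true) ∧
  (∀ e f : SRep n T, SRep.Equiv' e f → φ e = φ f) ∧
  (∀ e f g : SRep n T, e.t1 = e.t2 → f.t1 = f.t2 → SRep.Prod' e f g → φ g = (φ e && φ f)) ∧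
  (∀ e f : SRep n T, e.t1 = e.t2 → f.t1 = f.t2 → ¬ SRep.Compat e f →
    ¬(φ e = true ∧ φ f = true))

/-- The character `φ_{T₀}` of a tiling `T₀` of the punctured hull. -/
def charOf {n : ℕ} (T : Set (Tile n)) (T₀ : Set (Tile n)) : SRep n T → Bool :=
  fun e => decide (e ∈ xiOf T T₀)

/-- A point `(s, T')` of the set `Y`: `T' ∈ Ω_punc` lies in the domain `U(P,t₂)` of `θ_s`. -/
structure GermPt (n : ℕ) (T : Set (Tile n)) where
  s : SRep n T
  tl : Set (Tile n)
  mem_hull : tl ∈ puncturedHull T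
  mem_dom : tl ∈ U s.P s.t2

/-- The germ relation: `(s,T') ∼ (s'',T'')` iff `T' = T''` and there is an idempotent
`e = [t,P'',t]` with `T' ∈ U(P'',t)` and `s e = s'' e` (as classes). -/
def GermRel {n : ℕ} (T : Set (Tile n)) (p q : GermPt n T) : Prop :=
  p.tl = q.tl ∧ ∃ e : SRep n T, e.t1 = e.t2 ∧ p.tl ∈ U e.P e.t1 ∧
    ∃ g h : SRep n T, SRep.Prod' p.s e g ∧ SRep.Prod' q.s e h ∧ SRep.Equiv' g h

/-- The germ topology on the groupoid of germs: basic open sets `Θ(s,V)` for `V` an open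
subset of `U(P,t₂)`. -/
def germTop {n : ℕ} (T : Set (Tile n)) : TopologicalSpace (Quot (GermRel T)) :=
  TopologicalSpace.generateFrom
    {W | ∃ (s : SRep n T) (V : Set (Set (Tile n))),
      (letI := punctopology T;
        IsOpen {T' : ↥(puncturedHull T) | (T' : Set (Tile n)) ∈ V}) ∧
      V ⊆ U s.P s.t2 ∧
      W = {g | ∃ p : GermPt n T, p.s = s ∧ p.tl ∈ V ∧ Quot.mk (GermRel T) p = g}}

/-- `R_punc`: pairs `(T' + x, T')` of punctured-hull tilings which are translates. -/
def RpuncSet {n : ℕ} (T : Set (Tile n)) : Set (Set (Tile n) × Set (Tile n)) :=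
  {q | q.1 ∈ puncturedHull T ∧ q.2 ∈ puncturedHull T ∧ ∃ x : Rn n, q.1 = translateSet q.2 x}

/-- The topology `R_punc` inherits from `Ω_punc × ℝⁿ`. -/
def rpuncTop {n : ℕ} (T : Set (Tile n)) : TopologicalSpace ↥(RpuncSet T) :=
  letI := punctopology T
  TopologicalSpace.induced
    (fun q : ↥(RpuncSet T) =>
      ((⟨q.val.2, q.property.2.1⟩ : ↥(puncturedHull T)), Classical.choose q.property.2.2))
    inferInstance

/-! Choose finitely many tiles `Q` of `T'` whose interiors come within the inner radius of the
tiles of `P` of every point of a large ball around the origin. Since `T'` lies in the hull, some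
translate `Q + z` is a patch of `T`, and by repetitivity the ball of radius `R` around `z` meets
a copy `P + y` of `P`. Each tile of `P + y` then shares an interior point with a tile of `Q + z`;
tiles of a partial tiling sharing an interior point coincide, so `P + y - z ⊆ Q ⊆ T'`. The
equality of hulls follows since occurrence of patches is transitive. -/

open Metric Topology

section

variable {n : ℕ}

namespace Tile

lemma translate_zero (t : Tile n) : t.translate 0 = t := by
  cases t
  simp [Tile.translate]

lemma translate_translate (t : Tile n) (a b : Rn n) :
    (t.translate a).translate b = t.translate (a + b) := by
  simp [Tile.translate, add_assoc]

lemma interior_carrier (t : Tile n) :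
    interior t.carrier = (· + t.puncture) '' interior t.proto.carrier :=
  (Homeomorph.addRight t.puncture).image_interior _ |>.symm

lemma interior_carrier_translate (t : Tile n) (x : Rn n) :
    interior (t.translate x).carrier = (· + x) '' interior t.carrier := by
  simp only [interior_carrier, Tile.translate, Set.image_image, add_assoc]

lemma puncture_mem_interior (t : Tile n) : t.puncture ∈ interior t.carrier := by
  rw [interior_carrier]
  exact ⟨0, t.proto.origin_mem, zero_add _⟩

lemma mem_interior_carrier_of_dist_lt {t : Tile n} {ι : ℝ} {p : Rn n}
    (hι : ball 0 ι ⊆ interior t.proto.carrier) (hp : dist p t.puncture < ι) :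
    p ∈ interior t.carrier := by
  rw [interior_carrier]
  refine ⟨p - t.puncture, hι ?_, sub_add_cancel _ _⟩
  rwa [mem_ball_zero_iff, ← dist_eq_norm]

lemma puncture_mem_closedBall {t : Tile n} {d R : ℝ} {x : Rn n}
    (hd : t.proto.carrier ⊆ closedBall 0 d) (ht : (t.carrier ∩ ball x R).Nonempty) :
    t.puncture ∈ closedBall x (R + d) := by
  obtain ⟨_, ⟨p, hp, rfl⟩, hpx⟩ := ht
  rw [mem_closedBall_iff_norm]
  rw [mem_ball_iff_norm] at hpx
  have hp' : ‖p‖ ≤ d := mem_closedBall_zero_iff.mp (hd hp)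
  calc ‖t.puncture - x‖ = ‖(p + t.puncture - x) - p‖ := by congr 1; abel
    _ ≤ ‖p + t.puncture - x‖ + ‖p‖ := norm_sub_le _ _
    _ ≤ R + d := by linarith

end Tile

lemma ProtoTile.isCompact_carrier (p : ProtoTile n) : IsCompact p.carrier := by
  obtain ⟨e⟩ := p.ball_like
  have : CompactSpace (closedBall (0 : Rn n) 1) :=
    isCompact_iff_compactSpace.mp (isCompact_closedBall _ _)
  exact isCompact_iff_compactSpace.mpr e.symm.compactSpace

lemma Tile.isCompact_carrier (t : Tile n) : IsCompact t.carrier :=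
  t.proto.isCompact_carrier.image (continuous_id.add continuous_const)

lemma exists_pos_ball_subset_interior_proto {P : Set (Tile n)} (hP : P.Finite) :
    ∃ ι > 0, ∀ t ∈ P, ball 0 ι ⊆ interior t.proto.carrier := by
  have h : ∀ t ∈ P, ∀ᶠ ι in 𝓝[>] (0 : ℝ), ball 0 ι ⊆ interior t.proto.carrier := by
    intro t _
    obtain ⟨ε, hε, hball⟩ := isOpen_iff.mp isOpen_interior _ t.proto.origin_mem
    filter_upwards [Ioo_mem_nhdsGT hε] with ι hι using (ball_subset_ball hι.2.le).trans hball
  exact (eventually_mem_nhdsWithin.and (hP.eventually_all.mpr h)).exists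

lemma exists_proto_subset_closedBall {P : Set (Tile n)} (hP : P.Finite) :
    ∃ d, ∀ t ∈ P, t.proto.carrier ⊆ closedBall 0 d := by
  obtain ⟨d, hd⟩ := (hP.isCompact_biUnion fun t _ => t.proto.isCompact_carrier).isBounded
    |>.subset_closedBall 0
  exact ⟨d, fun t ht => (subset_biUnion_of_mem ht).trans hd⟩

lemma translateSet_translateSet (P : Set (Tile n)) (a b : Rn n) :
    translateSet (translateSet P a) b = translateSet P (a + b) := by
  simp only [translateSet, Set.image_image, Tile.translate_translate]

lemma IsPatch.translateSet {P : Set (Tile n)} (h : IsPatch P) (x : Rn n) :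
    IsPatch (translateSet P x) := by
  refine ⟨?_, h.2.image _⟩
  rintro _ ⟨a, ha, rfl⟩ _ ⟨b, hb, rfl⟩ hab
  rw [Tile.interior_carrier_translate, Tile.interior_carrier_translate,
    ← Set.image_inter (add_left_injective x), h.1 ha hb (by rintro rfl; exact hab rfl), Set.image_empty]

lemma IsPartialTiling.eq_of_mem_interior {T : Set (Tile n)} (hT : IsPartialTiling T)
    {t s : Tile n} (ht : t ∈ T) (hs : s ∈ T) {p : Rn n} (hpt : p ∈ interior t.carrier)
    (hps : p ∈ interior s.carrier) : t = s := by
  by_contra hne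
  exact (hT ht hs hne).subset ⟨hpt, hps⟩

lemma IsPartialTiling.translate_eq_of_dist_lt {T : Set (Tile n)} (hT : IsPartialTiling T)
    {t q : Tile n} {y z w : Rn n} {ι : ℝ} (ht : t.translate y ∈ T) (hq : q.translate z ∈ T)
    (hι : ball 0 ι ⊆ interior t.proto.carrier) (hw : w ∈ interior q.carrier)
    (hdist : dist (t.puncture + y - z) w < ι) : t.translate (y - z) = q := by
  have hwq : w + z ∈ interior (q.translate z).carrier := by
    rw [Tile.interior_carrier_translate]
    exact ⟨w, hw, rfl⟩
  have hwt : w + z ∈ interior (t.translate y).carrier := by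
    refine Tile.mem_interior_carrier_of_dist_lt hι ?_
    rwa [Tile.translate, ← sub_add_cancel (t.puncture + y) z, dist_add_right, dist_comm]
  calc t.translate (y - z) = (t.translate y).translate (-z) := by
        rw [Tile.translate_translate, sub_eq_add_neg]
    _ = (q.translate z).translate (-z) := by rw [hT.eq_of_mem_interior ht hq hwt hwq]
    _ = q := by rw [Tile.translate_translate, add_neg_cancel, Tile.translate_zero]

lemma IsTiling.dense_biUnion_interior {T : Set (Tile n)} (h : IsTiling T) :
    Dense (⋃ t ∈ T, interior t.carrier) := by
  have hcount : T.Countable :=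
    Set.PairwiseDisjoint.countable_of_isOpen (fun _ ha _ hb hab ↦
      Set.disjoint_iff_inter_eq_empty.mpr (h.1 ha hb hab))
      (fun t _ => isOpen_interior) (fun t _ => ⟨t.puncture, t.puncture_mem_interior⟩)
  exact dense_biUnion_interior_of_closed (fun t _ => t.isCompact_carrier.isClosed) hcount h.2

lemma IsTiling.exists_finite_subset_near {T : Set (Tile n)} (h : IsTiling T) {K : Set (Rn n)}
    (hK : IsCompact K) {ι : ℝ} (hι : 0 < ι) :
    ∃ Q ⊆ T, Q.Finite ∧ ∀ p ∈ K, ∃ q ∈ Q, ∃ w ∈ interior q.carrier, dist p w < ι := by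
  have hcover : K ⊆ ⋃ t ∈ T, thickening ι (interior t.carrier) := by
    intro p _
    obtain ⟨w, hwT, hwp⟩ := h.dense_biUnion_interior.exists_mem_open isOpen_ball
      ⟨p, mem_ball_self hι⟩
    obtain ⟨t, ht, hwt⟩ := Set.mem_iUnion₂.mp hwT
    exact Set.mem_iUnion₂.mpr ⟨t, ht, mem_thickening_iff.mpr ⟨w, hwt, mem_ball'.mp hwp⟩⟩
  obtain ⟨Q, hQT, hQ, hKQ⟩ := hK.elim_finite_subcover_image (fun _ _ => isOpen_thickening) hcover
  refine ⟨Q, hQT, hQ, fun p hp => ?_⟩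
  obtain ⟨q, hq, hpq⟩ := Set.mem_iUnion₂.mp (hKQ hp)
  exact ⟨q, hq, mem_thickening_iff.mp hpq⟩

theorem Repetitive.exists_translateSet_subset_of_mem_hull {T : Set (Tile n)}
    (hT : IsPartialTiling T) (hrep : Repetitive T) {T' : Set (Tile n)} (hT' : T' ∈ hull T)
    {P : Set (Tile n)} (hPT : P ⊆ T) (hP : IsPatch P) :
    ∃ x : Rn n, translateSet P x ⊆ T' := by
  obtain ⟨R, -, hR⟩ := hrep P hPT hP
  obtain ⟨ι, hι, hιP⟩ := exists_pos_ball_subset_interior_proto hP.2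
  obtain ⟨d, hd⟩ := exists_proto_subset_closedBall hP.2
  obtain ⟨Q, hQT', hQ, hnear⟩ :=
    hT'.1.exists_finite_subset_near (isCompact_closedBall (0 : Rn n) (R + d)) hι
  obtain ⟨z, hz⟩ := hT'.2 Q hQT' ⟨hT'.1.1.mono hQT', hQ⟩
  obtain ⟨y, hy⟩ := hR z
  refine ⟨y - z, ?_⟩
  rintro _ ⟨t, ht, rfl⟩
  obtain ⟨htT, hmeet⟩ := hy ⟨t, ht, rfl⟩
  have hK : t.puncture + y - z ∈ closedBall 0 (R + d) := by
    rw [mem_closedBall_zero_iff, ← mem_closedBall_iff_norm]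
    exact Tile.puncture_mem_closedBall (t := t.translate y) (hd t ht) hmeet
  obtain ⟨q, hq, w, hw, hdist⟩ := hnear _ hK
  show t.translate (y - z) ∈ T'
  rw [hT.translate_eq_of_dist_lt htT (hz ⟨q, hq, rfl⟩) (hιP t ht) hw hdist]
  exact hQT' hq

theorem hull_subset_hull {T₁ T₂ : Set (Tile n)}
    (h : ∀ P ⊆ T₁, IsPatch P → ∃ x : Rn n, translateSet P x ⊆ T₂) : hull T₁ ⊆ hull T₂ := by
  rintro T ⟨hT, hocc⟩
  refine ⟨hT, fun P hPT hP => ?_⟩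
  obtain ⟨x, hx⟩ := hocc P hPT hP
  obtain ⟨x', hx'⟩ := h _ hx (hP.translateSet x)
  exact ⟨x + x', by rwa [← translateSet_translateSet]⟩

end

/-- If a tiling `T` of ℝⁿ is repetitive, then every tiling `T'` of the continuous hull of
`T` contains a translate of every patch of `T`; consequently the hulls coincide:
`Ω_{T'} = Ω_T`. -/
theorem repetitive_hull_minimal {n : ℕ} (T : Set (Tile n)) (hT : IsTiling T)
    (hrep : Repetitive T) :
    ∀ T' ∈ hull T,
      (∀ P ⊆ T, IsPatch P → ∃ x : Rn n, translateSet P x ⊆ T') ∧ hull T' = hull T := by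
  intro T' hT'
  have hocc : ∀ P ⊆ T, IsPatch P → ∃ x : Rn n, translateSet P x ⊆ T' :=
    fun P hPT hP => hrep.exists_translateSet_subset_of_mem_hull hT.1 hT' hPT hP
  exact ⟨hocc, (hull_subset_hull hT'.2).antisymm (hull_subset_hull hocc)⟩
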